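/- Let B ∈ ℂ^{m×n}, W ∈ ℂ^{n×m}, let k be a natural number with k = ind(BW), let X be a minimal rank W-weighted weak Drazin inverse of B, and let E ∈ ℂ^{m×n} with col(E·W) ⊆ col((B·W)^k) and col((E·W)^*) ⊆ col((X·W·B·W)^*). Assume the matrices I + W·E·W·X ∈ ℂ^{n×n} and I + X·W·E·W ∈ ℂ^{m×m} are invertible (in the paper this is guaranteed by ‖W·E·W·X‖ < 1), and set 𝔇 = B + E. Then X·(I + W·E·W·X)⁻¹ is a minimal rank W-weighted weak Drazin inverse of 𝔇, i.e. X·(I + W·E·W·X)⁻¹·W·(𝔇·W)^{k+1} = (𝔇·W)^k and rank(X·(I + W·E·W·X)⁻¹) = rank((𝔇·W)^k). Moreover X·(I + W·E·W·X)⁻¹·W·𝔇·W = X·W·B·W and W·𝔇·W·(I + X·W·E·W)⁻¹·X = W·B·W·X. -/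

import Mathlib

open Matrix

/-- The index of a square complex matrix: the least `j` with `rank (M^j) = rank (M^(j+1))`. -/
noncomputable def matIndex {p : ℕ} (M : Matrix (Fin p) (Fin p) ℂ) : ℕ :=
  sInf {j : ℕ | (M ^ j).rank = (M ^ (j + 1)).rank}

/-- The column space of a complex matrix: the range of `v ↦ M *ᵥ v`. -/
noncomputable def colSpace {a b : ℕ} (M : Matrix (Fin a) (Fin b) ℂ) :
    Submodule ℂ (Fin a → ℂ) :=
  LinearMap.range M.mulVecLin

/-- The null space of a complex matrix: the kernel of `v ↦ M *ᵥ v`. -/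
noncomputable def nullSpace {a b : ℕ} (M : Matrix (Fin a) (Fin b) ℂ) :
    Submodule ℂ (Fin b → ℂ) :=
  LinearMap.ker M.mulVecLin

/-!
Write `A = BW` and `P = XWA`. The rank condition forces `col X = col A^k`, so `P` is an idempotent
fixing `col A^k`, and the index condition gives `AXW·A^k = A^k`. The two range conditions on `E`
then read `EW·P = EW` and `AXW·EW = EW`, which are exactly what makes
`W𝔇W = (I + WEWX)·WBW = WBW·(I + XWEW)`; the last two identities follow at once.
Since `EW = A^k C`, every power `(A + A^k C)^j` is `A^j` modulo the right ideal generated by `A^k`, so `P`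
fixes `(𝔇W)^k`, which gives the first identity, and `(𝔇W)^k = A^k S`. Conversely
`Q = X(I + WEWX)⁻¹W` satisfies `Q·𝔇W = P`, and iterating gives `Q^k (𝔇W)^k A^k = A^k`, so
`(𝔇W)^k` and `A^k` have the same rank.
-/

section ColumnSpace

variable {a b c : ℕ}

theorem colSpace_mul_le (M : Matrix (Fin a) (Fin b) ℂ) (N : Matrix (Fin b) (Fin c) ℂ) :
    colSpace (M * N) ≤ colSpace M := by
  rw [colSpace, colSpace, Matrix.mulVecLin_mul]
  exact LinearMap.range_comp_le_range _ _

theorem exists_eq_mul_of_colSpace_le {M : Matrix (Fin a) (Fin b) ℂ}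
    {N : Matrix (Fin a) (Fin c) ℂ} (h : colSpace M ≤ colSpace N) :
    ∃ C : Matrix (Fin c) (Fin b) ℂ, M = N * C := by
  obtain ⟨g, hg⟩ := Module.projective_lifting_property N.mulVecLin.rangeRestrict
    (M.mulVecLin.codRestrict _ fun v => h (LinearMap.mem_range_self _ v))
    N.mulVecLin.surjective_rangeRestrict
  refine ⟨LinearMap.toMatrix' g, Matrix.toLin'.injective (LinearMap.ext fun v => ?_)⟩
  simp only [Matrix.toLin'_mul, LinearMap.comp_apply, Matrix.toLin'_toMatrix']
  exact congr(Subtype.val ($hg v)).symm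

theorem exists_eq_mul_of_colSpace_conjTranspose_le {M : Matrix (Fin a) (Fin b) ℂ}
    {N : Matrix (Fin c) (Fin b) ℂ} (h : colSpace Mᴴ ≤ colSpace Nᴴ) :
    ∃ C : Matrix (Fin a) (Fin c) ℂ, M = C * N := by
  obtain ⟨C, hC⟩ := exists_eq_mul_of_colSpace_le h
  exact ⟨Cᴴ, by rw [← conjTranspose_conjTranspose M, hC, conjTranspose_mul,
    conjTranspose_conjTranspose]⟩

theorem exists_eq_mul_of_colSpace_le_of_rank_le {M : Matrix (Fin a) (Fin b) ℂ}
    {N : Matrix (Fin a) (Fin c) ℂ} (h : colSpace N ≤ colSpace M) (hr : M.rank ≤ N.rank) :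
    ∃ C : Matrix (Fin c) (Fin b) ℂ, M = N * C :=
  exists_eq_mul_of_colSpace_le (Submodule.eq_of_le_of_finrank_le h hr).ge

theorem exists_eq_mul_of_mul_eq_of_rank_le {M : Matrix (Fin a) (Fin b) ℂ}
    {Y : Matrix (Fin b) (Fin c) ℂ} {N : Matrix (Fin a) (Fin c) ℂ} (h : M * Y = N)
    (hr : M.rank ≤ N.rank) : ∃ C : Matrix (Fin c) (Fin b) ℂ, M = N * C :=
  exists_eq_mul_of_colSpace_le_of_rank_le (h ▸ colSpace_mul_le M Y) hr

end ColumnSpace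

theorem exists_rank_pow_eq_rank_pow_succ {p : ℕ} (M : Matrix (Fin p) (Fin p) ℂ) :
    ∃ j, (M ^ j).rank = (M ^ (j + 1)).rank := by
  by_contra! h
  refine not_strictAnti_of_wellFoundedLT (fun j => (M ^ j).rank)
    (strictAnti_nat_of_succ_lt fun j => ?_)
  exact (pow_succ M j ▸ rank_mul_le_left _ _).lt_of_ne' (h j)

theorem exists_pow_matIndex_eq_pow_succ_mul {p : ℕ} (M : Matrix (Fin p) (Fin p) ℂ) :
    ∃ C, M ^ matIndex M = M ^ (matIndex M + 1) * C :=
  exists_eq_mul_of_colSpace_le_of_rank_le (pow_succ M _ ▸ colSpace_mul_le _ _)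
    (Nat.sInf_mem (exists_rank_pow_eq_rank_pow_succ M)).le

section Ring

variable {R : Type*} [Ring R]

theorem exists_add_pow_eq_pow_add_mul (a c : R) (k : ℕ) :
    ∀ j : ℕ, ∃ r, (a + a ^ k * c) ^ j = a ^ j + a ^ k * r
  | 0 => ⟨0, by simp⟩
  | j + 1 => by
    obtain ⟨r, hr⟩ := exists_add_pow_eq_pow_add_mul a c k j
    refine ⟨a * r + c * (a + a ^ k * c) ^ j, ?_⟩
    rw [pow_succ', add_mul, mul_assoc]
    nth_rewrite 1 [hr]
    rw [mul_add, ← pow_succ', ← mul_assoc, (Commute.self_pow a k).eq, mul_assoc, add_assoc,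
      ← mul_add]

theorem exists_add_pow_eq_pow_mul (a c : R) (k : ℕ) : ∃ s, (a + a ^ k * c) ^ k = a ^ k * s := by
  obtain ⟨r, hr⟩ := exists_add_pow_eq_pow_add_mul a c k k
  exact ⟨1 + r, by rw [hr, mul_add, mul_one]⟩

theorem exists_add_pow_mul_pow_eq_pow_mul (a c : R) (k j : ℕ) :
    ∃ s, (a + a ^ k * c) ^ j * a ^ k = a ^ k * s := by
  obtain ⟨r, hr⟩ := exists_add_pow_eq_pow_add_mul a c k j
  exact ⟨a ^ j + r * a ^ k, by rw [hr, add_mul, mul_add, pow_mul_comm, mul_assoc]⟩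

theorem mul_add_pow_eq_of_mul_pow_eq {p a : R} (c : R) {k : ℕ} (hp : p * a ^ k = a ^ k) :
    p * (a + a ^ k * c) ^ k = (a + a ^ k * c) ^ k := by
  obtain ⟨s, hs⟩ := exists_add_pow_eq_pow_mul a c k
  rw [hs, ← mul_assoc, hp]

end Ring

theorem pow_mul_pow_mul_eq_of_mul_pow_succ_mul {M : Type*} [Monoid M] {q d y : M}
    (h : ∀ j, q * (d ^ (j + 1) * y) = d ^ j * y) : ∀ j, q ^ j * (d ^ j * y) = y
  | 0 => by simp
  | j + 1 => by
    rw [pow_succ, mul_assoc, h, pow_mul_pow_mul_eq_of_mul_pow_succ_mul h j]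

theorem Matrix.rank_add_pow_mul_pow_eq_rank_pow {R : Type*} [CommRing R] [StrongRankCondition R]
    {m : Type*} [Fintype m] [DecidableEq m] {p q a : Matrix m m R} (c : Matrix m m R) {k : ℕ}
    (hp : p * a ^ k = a ^ k) (hq : q * (a + a ^ k * c) = p) :
    ((a + a ^ k * c) ^ k).rank = (a ^ k).rank := by
  set d := a + a ^ k * c
  have hstep : ∀ j, q * (d ^ (j + 1) * a ^ k) = d ^ j * a ^ k := fun j => by
    obtain ⟨s, hs⟩ := exists_add_pow_mul_pow_eq_pow_mul a c k j
    rw [pow_succ', mul_assoc, ← mul_assoc q, hq, hs, ← mul_assoc, hp]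
  obtain ⟨s, hs⟩ := exists_add_pow_eq_pow_mul a c k
  refine le_antisymm (hs ▸ rank_mul_le_left _ _) ?_
  calc (a ^ k).rank = (q ^ k * (d ^ k * a ^ k)).rank := by
        rw [pow_mul_pow_mul_eq_of_mul_pow_succ_mul hstep]
    _ ≤ (d ^ k).rank := (rank_mul_le_right _ _).trans (rank_mul_le_left _ _)

section Perturbation

variable {R : Type*} [CommRing R] {m n : Type*} [Fintype m] [Fintype n] [DecidableEq m]
  {B E X : Matrix m n R} {W : Matrix n m R} {k : ℕ}

theorem mul_inv_mul_add_mul_eq [DecidableEq n] (hu : IsUnit (1 + W * E * W * X))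
    (hX : X * W * (B * W) ^ (k + 1) = (B * W) ^ k) {T : Matrix m n R} (hT : X = (B * W) ^ k * T)
    {C : Matrix m m R} (hE : E * W = C * (X * W * B * W)) :
    X * (1 + W * E * W * X)⁻¹ * W * (B + E) * W = X * W * B * W := by
  have hPX : X * W * B * W * X = X :=
    calc X * W * B * W * X = X * W * (B * W) * ((B * W) ^ k * T) := by
          rw [← hT]; simp only [Matrix.mul_assoc]
      _ = X * W * (B * W) ^ (k + 1) * T := by rw [pow_succ']; simp only [Matrix.mul_assoc]
      _ = X := by rw [hX, hT]
  have hEP : E * W * (X * W * B * W) = E * W :=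
    calc E * W * (X * W * B * W) = C * (X * W * B * W * X) * (W * B * W) := by
          rw [hE]; simp only [Matrix.mul_assoc]
      _ = E * W := by rw [hPX, hE]; simp only [Matrix.mul_assoc]
  have hWDW : W * (B + E) * W = (1 + W * E * W * X) * (W * B * W) :=
    calc W * (B + E) * W = W * B * W + W * (E * W * (X * W * B * W)) := by
          rw [hEP]; simp only [Matrix.mul_add, Matrix.add_mul, Matrix.mul_assoc]
      _ = (1 + W * E * W * X) * (W * B * W) := by
          simp only [Matrix.add_mul, Matrix.one_mul, Matrix.mul_assoc]
  calc X * (1 + W * E * W * X)⁻¹ * W * (B + E) * W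
      = X * ((1 + W * E * W * X)⁻¹ * (W * (B + E) * W)) := by simp only [Matrix.mul_assoc]
    _ = X * W * B * W := by
      rw [hWDW, nonsing_inv_mul_cancel_left _ _ ((isUnit_iff_isUnit_det _).mp hu)]
      simp only [Matrix.mul_assoc]

theorem mul_add_mul_inv_mul_eq (hu : IsUnit (1 + X * W * E * W))
    (hX : X * W * (B * W) ^ (k + 1) = (B * W) ^ k) {C₁ : Matrix m m R}
    (hC₁ : (B * W) ^ k = (B * W) ^ (k + 1) * C₁) {C : Matrix m m R} (hE : E * W = (B * W) ^ k * C) :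
    W * (B + E) * W * (1 + X * W * E * W)⁻¹ * X = W * B * W * X := by
  have hAXW : B * W * (X * W * (B * W) ^ k) = (B * W) ^ k :=
    calc B * W * (X * W * (B * W) ^ k) = B * W * (X * W * (B * W) ^ (k + 1)) * C₁ := by
          rw [hC₁]; simp only [Matrix.mul_assoc]
      _ = (B * W) ^ k := by rw [hX, ← pow_succ', ← hC₁]
  have hAXE : B * W * (X * W * (E * W)) = E * W :=
    calc B * W * (X * W * (E * W)) = B * W * (X * W * (B * W) ^ k) * C := by
          rw [hE]; simp only [Matrix.mul_assoc]
      _ = E * W := by rw [hAXW, hE]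
  have hWDW : W * (B + E) * W = W * B * W * (1 + X * W * E * W) :=
    calc W * (B + E) * W = W * B * W + W * (B * W * (X * W * (E * W))) := by
          rw [hAXE]; simp only [Matrix.mul_add, Matrix.add_mul, Matrix.mul_assoc]
      _ = W * B * W * (1 + X * W * E * W) := by
          simp only [Matrix.mul_add, Matrix.mul_one, Matrix.mul_assoc]
  rw [hWDW, mul_nonsing_inv_cancel_right _ _ ((isUnit_iff_isUnit_det _).mp hu)]

end Perturbation

/-- **Theorem 3.17.** Perturbation of the minimal rank W-weighted weak Drazin inverse. -/
theorem weighted_weak_Drazin_perturbation {m n : ℕ}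
    (B : Matrix (Fin m) (Fin n) ℂ) (W : Matrix (Fin n) (Fin m) ℂ)
    (k : ℕ) (hk : k = matIndex (B * W))
    (X : Matrix (Fin m) (Fin n) ℂ)
    (hX1 : X * W * (B * W) ^ (k + 1) = (B * W) ^ k)
    (hX2 : X.rank = ((B * W) ^ k).rank)
    (E : Matrix (Fin m) (Fin n) ℂ)
    (hE1 : colSpace (E * W) ≤ colSpace ((B * W) ^ k))
    (hE2 : colSpace (E * W)ᴴ ≤ colSpace (X * W * B * W)ᴴ)
    (hu1 : IsUnit (1 + W * E * W * X))
    (hu2 : IsUnit (1 + X * W * E * W))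
    (𝔇 : Matrix (Fin m) (Fin n) ℂ) (h𝔇 : 𝔇 = B + E) :
    X * (1 + W * E * W * X)⁻¹ * W * (𝔇 * W) ^ (k + 1) = (𝔇 * W) ^ k ∧
    (X * (1 + W * E * W * X)⁻¹).rank = ((𝔇 * W) ^ k).rank ∧
    X * (1 + W * E * W * X)⁻¹ * W * 𝔇 * W = X * W * B * W ∧
    W * 𝔇 * W * (1 + X * W * E * W)⁻¹ * X = W * B * W * X := by
  subst h𝔇
  obtain ⟨T, hT⟩ := exists_eq_mul_of_mul_eq_of_rank_le (Y := W * (B * W) ^ (k + 1))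
    (by rw [← Matrix.mul_assoc, hX1]) hX2.le
  obtain ⟨C₁, hC₁⟩ := hk ▸ exists_pow_matIndex_eq_pow_succ_mul (B * W)
  obtain ⟨C, hC⟩ := exists_eq_mul_of_colSpace_le hE1
  obtain ⟨C', hC'⟩ := exists_eq_mul_of_colSpace_conjTranspose_le hE2
  have hP : X * W * (B * W) * (B * W) ^ k = (B * W) ^ k := by
    rw [Matrix.mul_assoc, ← pow_succ', hX1]
  have hDW : (B + E) * W = B * W + (B * W) ^ k * C := by rw [Matrix.add_mul, hC]
  have h3 := mul_inv_mul_add_mul_eq hu1 hX1 hT hC'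
  have hq : X * (1 + W * E * W * X)⁻¹ * W * (B * W + (B * W) ^ k * C) = X * W * (B * W) := by
    rw [← hDW]; simpa only [Matrix.mul_assoc] using h3
  refine ⟨?_, ?_, h3, mul_add_mul_inv_mul_eq hu2 hX1 hC₁ hC⟩
  · rw [pow_succ', ← Matrix.mul_assoc, hDW, hq, mul_add_pow_eq_of_mul_pow_eq C hP]
  · rw [rank_mul_eq_left_of_isUnit_det _ _ (isUnit_nonsing_inv_det _
      ((isUnit_iff_isUnit_det _).mp hu1)), hX2, hDW, rank_add_pow_mul_pow_eq_rank_pow C hP hq]
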